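/- Let χ : ℝ → ℂ be differentiable with χ(x) → 0 as |x| → ∞ and |χ'(x)| ≤ φ(|x|), where φ : [0,∞) → [0,∞) is non-increasing with ∫₀^∞ φ(s) ds < ∞. Let P be a projection-valued measure on ℝ in a separable Hilbert space H and S a trace-class operator. Then for intervals Δ¹ = (−∞, b₁) and Δ² = [a₂, ∞) with δ = a₂ − b₁ ≥ 0, the double operator integral S_χ = ∫∫ χ(x−y) P(dx) S P(dy) satisfies ‖P(Δ¹) S_χ P(Δ²)‖₁ ≤ ‖S‖₁ ∫_δ^∞ φ(s) ds. -/

import Mathlib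

open Filter MeasureTheory

variable {H : Type*} [NormedAddCommGroup H] [InnerProductSpace ℂ H] [CompleteSpace H]

/-- A projection-valued measure on `ℝ`. -/
structure ProjValMeasure (H : Type*) [NormedAddCommGroup H] [InnerProductSpace ℂ H]
    [CompleteSpace H] where
  P : Set ℝ → (H →L[ℂ] H)
  idem : ∀ s, IsIdempotentElem (P s)
  selfadj : ∀ s, IsSelfAdjoint (P s)
  empty : P ∅ = 0
  univ : P Set.univ = 1
  inter : ∀ s t, P (s ∩ t) = P s ∘L P t
  sigma_additive : ∀ (s : ℕ → Set ℝ), Pairwise (Function.onFun Disjoint s) →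
    ∀ x : H, HasSum (fun n => P (s n) x) (P (⋃ n, s n) x)

/-- The `i`-th grid point of the uniform partition of `[-n, n]` into `n²` pieces. -/
noncomputable def gridPt (n i : ℕ) : ℝ := -(n : ℝ) + 2 * i / n

/-- Riemann–Stieltjes sum for the double operator integral
`∫∫ χ(x-y) P(dx) S P(dy)` over the square `[-n,n] × [-n,n]`. -/
noncomputable def doubleStieltjesSum (Pm : ProjValMeasure H) (χ : ℝ → ℂ)
    (S : H →L[ℂ] H) (n : ℕ) : H →L[ℂ] H :=
  ∑ i ∈ Finset.range (n * n), ∑ j ∈ Finset.range (n * n),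
    χ (gridPt n i - gridPt n j) •
      (Pm.P (Set.Ico (gridPt n i) (gridPt n (i + 1))) ∘L S ∘L
        Pm.P (Set.Ico (gridPt n j) (gridPt n (j + 1))))

/-- `Sχ = ∫∫ χ(x−y) P(dx) S P(dy)` as a limit of double Riemann–Stieltjes sums. -/
def IsDoubleStieltjesIntegral (Pm : ProjValMeasure H) (χ : ℝ → ℂ)
    (S Sχ : H →L[ℂ] H) : Prop :=
  Tendsto (fun n => doubleStieltjesSum Pm χ S n) atTop (nhds Sχ)

/-!
For `x < b₁ ≤ a₂ ≤ y` write `χ (x - y) = ∫_{-∞}^{x} χ' (s - y) ds`. Then formally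
`P(Δ¹) S_χ P(Δ²) = ∫_{-∞}^{b₁} P((s, b₁)) S (∫_{Δ²} χ' (s - y) P(dy)) ds`; the left factor is a
projection and the right one has norm at most `sup_{y ≥ a₂} φ |s - y| = φ (a₂ - s)`, so the
trace norm is at most `‖S‖₁ ∫_{-∞}^{b₁} φ (a₂ - s) ds = ‖S‖₁ ∫_δ^∞ φ`.

On the Riemann sums this is an Abel summation in the first variable, along the grid extended to
the left until `χ` is `ε`-small there. The grid step costs `2 / n` in `δ`, which is recovered as
`n → ∞`.
-/

open Set Finset Topology

theorem IsStarProjection.sum {R ι : Type*} [NonUnitalSemiring R] [StarRing R] {s : Finset ι}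
    {p : ι → R} (hp : ∀ i ∈ s, IsStarProjection (p i))
    (horth : (s : Set ι).Pairwise fun i j => p i * p j = 0) :
    IsStarProjection (∑ i ∈ s, p i) := by
  classical
  induction s using Finset.induction_on with
  | empty => simp [IsStarProjection.zero]
  | insert a s ha ih =>
    rw [Finset.sum_insert ha]
    refine (hp a (mem_insert_self a s)).add
      (ih (fun i hi => hp i (mem_insert_of_mem hi)) (horth.mono (by simp))) ?_
    rw [Finset.mul_sum]
    exact Finset.sum_eq_zero fun i hi =>
      horth (by simp) (by simp [hi]) (by rintro rfl; exact ha hi)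

section InnerProductSpace

variable {𝕜 E ι : Type*} [RCLike 𝕜] [NormedAddCommGroup E] [InnerProductSpace 𝕜 E]

theorem norm_sum_sq_eq_sum_norm_sq {s : Finset ι} {v : ι → E}
    (horth : (s : Set ι).Pairwise fun i j => inner 𝕜 (v i) (v j) = 0) :
    ‖∑ i ∈ s, v i‖ ^ 2 = ∑ i ∈ s, ‖v i‖ ^ 2 := by
  classical
  induction s using Finset.induction_on with
  | empty => simp
  | insert a s ha ih =>
    rw [Finset.sum_insert ha, Finset.sum_insert ha, ← ih (horth.mono (by simp))]
    have hperp : inner 𝕜 (v a) (∑ i ∈ s, v i) = 0 := by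
      rw [inner_sum]
      exact Finset.sum_eq_zero fun i hi =>
        horth (by simp) (by simp [hi]) (by rintro rfl; exact ha hi)
    simp [@norm_add_sq 𝕜, hperp]

variable [CompleteSpace E]

theorem norm_sum_smul_le_of_isStarProjection {s : Finset ι} {p : ι → E →L[𝕜] E}
    (hp : ∀ i ∈ s, IsStarProjection (p i))
    (horth : (s : Set ι).Pairwise fun i j => p i * p j = 0) (c : ι → 𝕜) {C : ℝ} (hC : 0 ≤ C)
    (hc : ∀ i ∈ s, p i ≠ 0 → ‖c i‖ ≤ C) :
    ‖∑ i ∈ s, c i • p i‖ ≤ C := by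
  refine ContinuousLinearMap.opNorm_le_bound _ hC fun x => ?_
  have hvec : (s : Set ι).Pairwise fun i j => inner 𝕜 (p i x) (p j x) = 0 := by
    intro i hi j hj hij
    calc inner 𝕜 (p i x) (p j x) = inner 𝕜 x (p i (p j x)) :=
          (hp i hi).isSelfAdjoint.isSymmetric _ _
      _ = 0 := by rw [← mul_apply_eq_comp, horth hi hj hij]; simp
  have hsmul : (s : Set ι).Pairwise fun i j => inner 𝕜 (c i • p i x) (c j • p j x) = 0 :=
    fun i hi j hj hij => by simp [inner_smul_left, inner_smul_right, hvec hi hj hij]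
  have hterm : ∀ i ∈ s, ‖c i • p i x‖ ^ 2 ≤ C ^ 2 * ‖p i x‖ ^ 2 := by
    intro i hi
    rw [norm_smul, mul_pow]
    by_cases h0 : p i = 0
    · simp [h0]
    · gcongr
      exact hc i hi h0
  have hsum : ‖(∑ i ∈ s, p i) x‖ ≤ ‖x‖ :=
    (ContinuousLinearMap.le_of_opNorm_le _ ((IsStarProjection.sum hp horth).norm_le) x).trans
      (by simp)
  refine (pow_le_pow_iff_left₀ (norm_nonneg _) (by positivity) two_ne_zero).1 ?_
  calc ‖(∑ i ∈ s, c i • p i) x‖ ^ 2 = ‖∑ i ∈ s, c i • p i x‖ ^ 2 := by simp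
    _ = ∑ i ∈ s, ‖c i • p i x‖ ^ 2 := norm_sum_sq_eq_sum_norm_sq hsmul
    _ ≤ ∑ i ∈ s, C ^ 2 * ‖p i x‖ ^ 2 := Finset.sum_le_sum hterm
    _ = C ^ 2 * ‖(∑ i ∈ s, p i) x‖ ^ 2 := by
      rw [← Finset.mul_sum, ← norm_sum_sq_eq_sum_norm_sq hvec]; simp
    _ ≤ (C * ‖x‖) ^ 2 := by rw [mul_pow]; gcongr

end InnerProductSpace

/-- The properties of the trace norm `‖·‖₁` on which the estimate rests. -/
structure IsIdealGauge {R : Type*} [NormedRing R] (ν : R → ℝ) : Prop where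
  nonneg : ∀ S, 0 ≤ ν S
  add_le : ∀ S T, ν (S + T) ≤ ν S + ν T
  mul_mul_le : ∀ A S B, ν (A * S * B) ≤ ‖A‖ * ν S * ‖B‖

namespace IsIdealGauge

variable {R ι : Type*} [NormedRing R] {ν : R → ℝ}

theorem map_zero_le (hν : IsIdealGauge ν) : ν 0 ≤ 0 := by
  simpa using hν.mul_mul_le 0 0 0

theorem sum_le (hν : IsIdealGauge ν) (s : Finset ι) (g : ι → R) :
    ν (∑ i ∈ s, g i) ≤ ∑ i ∈ s, ν (g i) :=
  Finset.le_sum_of_subadditive ν hν.map_zero_le hν.add_le s g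

theorem mul_mul_le_of_norm_le (hν : IsIdealGauge ν) {A B : R} (S : R) {C : ℝ} (hA : ‖A‖ ≤ 1)
    (hB : ‖B‖ ≤ C) : ν (A * S * B) ≤ ν S * C :=
  calc ν (A * S * B) ≤ ‖A‖ * ν S * ‖B‖ := hν.mul_mul_le A S B
    _ ≤ 1 * ν S * C := by have := hν.nonneg S; gcongr
    _ = ν S * C := by ring

theorem continuous (hν : IsIdealGauge ν) : Continuous ν := by
  refine (LipschitzWith.of_le_add_mul' (ν 1 * ‖(1 : R)‖) fun S T => ?_).continuous
  calc ν S ≤ ν T + ν ((S - T) * 1 * 1) := by simpa using hν.add_le T (S - T)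
    _ ≤ ν T + ‖S - T‖ * ν 1 * ‖(1 : R)‖ := by gcongr; exact hν.mul_mul_le _ _ _
    _ = ν T + ν 1 * ‖(1 : R)‖ * dist S T := by rw [dist_eq_norm]; ring

end IsIdealGauge

theorem Finset.sum_sum_smul_eq_add_sum_sum_sub {R M ι κ : Type*} [Ring R] [AddCommGroup M]
    [Module R M] (s : Finset ι) (t : Finset κ) (m : ι → ℕ) {K : ℕ} (hm : ∀ i ∈ s, m i ≤ K)
    (f : ℕ → κ → R) (g : ι → κ → M) :
    ∑ i ∈ s, ∑ j ∈ t, f (m i) j • g i j =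
      ∑ i ∈ s, ∑ j ∈ t, f 0 j • g i j +
        ∑ k ∈ range K, ∑ i ∈ s with k < m i, ∑ j ∈ t, (f (k + 1) j - f k j) • g i j := by
  rw [Finset.sum_comm' (t' := s) (s' := fun i => range (m i))
    (fun k i => by simp only [mem_range, mem_filter]; grind [hm i]), ← Finset.sum_add_distrib]
  refine Finset.sum_congr rfl fun i _ => ?_
  rw [Finset.sum_comm, ← Finset.sum_add_distrib]
  refine Finset.sum_congr rfl fun j _ => ?_
  rw [← Finset.sum_smul, ← add_smul, Finset.sum_range_sub (f · j), add_sub_cancel]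

theorem Finset.sum_mul_mul_sum_smul {R A ι κ : Type*} [CommSemiring R] [Semiring A] [Algebra R A]
    (s : Finset ι) (t : Finset κ) (a : ι → A) (x : A) (c : κ → R) (b : κ → A) :
    (∑ i ∈ s, a i) * x * ∑ j ∈ t, c j • b j = ∑ i ∈ s, ∑ j ∈ t, c j • (a i * x * b j) := by
  simp only [Finset.sum_mul, Finset.mul_sum, mul_smul_comm, Finset.smul_sum]
  exact Finset.sum_comm

theorem norm_sub_le_integral_of_norm_deriv_le_antitone {E : Type*} [NormedAddCommGroup E]
    [NormedSpace ℝ E] [CompleteSpace E] {χ χ' : ℝ → E} {ψ : ℝ → ℝ}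
    (hχ : ∀ x, HasDerivAt χ (χ' x) x) (hχ' : ∀ x, ‖χ' x‖ ≤ ψ |x|) (hψ : Antitone ψ)
    {a b y₀ y : ℝ} (hab : a ≤ b) (hy : y₀ ≤ y) :
    ‖χ (b - y) - χ (a - y)‖ ≤ ∫ s in a..b, ψ (y₀ - s) := by
  have hbound : ∀ s, ‖χ' (s - y)‖ ≤ ψ (y₀ - s) := fun s =>
    (hχ' _).trans (hψ (by rw [abs_sub_comm]; exact (sub_le_sub_right hy s).trans (le_abs_self _)))
  have hg : IntervalIntegrable (fun s => ψ (y₀ - s)) volume a b :=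
    Monotone.intervalIntegrable fun s t hst => hψ (by linarith)
  have hχ'_meas : StronglyMeasurable χ' := by
    rw [show χ' = deriv χ from funext fun x => (hχ x).deriv.symm]
    exact stronglyMeasurable_deriv χ
  rw [← intervalIntegral.integral_eq_sub_of_hasDerivAt
    (fun s _ => (hχ (s - y)).comp_sub_const s y)
    (hg.mono_fun' (hχ'_meas.comp_measurable (measurable_id.sub_const y)).aestronglyMeasurable
      (ae_of_all _ hbound))]
  exact intervalIntegral.norm_integral_le_of_norm_le hab (ae_of_all _ fun s _ => hbound s) hg

theorem Antitone.integrableOn_Ioi_of_integrableOn_Ioi {ψ : ℝ → ℝ} (hψ : Antitone ψ) {a : ℝ}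
    (ha : IntegrableOn ψ (Ioi a)) (c : ℝ) : IntegrableOn ψ (Ioi c) := by
  rcases le_total a c with h | h
  · exact ha.mono_set (Ioi_subset_Ioi h)
  · rw [← Ioc_union_Ioi_eq_Ioi h]
    exact ((hψ.locallyIntegrable.integrableOn_isCompact isCompact_Icc).mono_set
      Ioc_subset_Icc_self).union ha

theorem exists_nat_forall_norm_le_of_tendsto_atBot {E : Type*} [SeminormedAddCommGroup E]
    {χ : ℝ → E} (hχ : Tendsto χ atBot (𝓝 0)) {ε c : ℝ} (hε : 0 < ε) (hc : 0 < c) :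
    ∃ M : ℕ, ∀ t ≤ -(c * M), ‖χ t‖ ≤ ε := by
  obtain ⟨R, hR⟩ := eventually_atBot.1 (hχ.eventually (Metric.closedBall_mem_nhds 0 hε))
  have hM : Tendsto (fun M : ℕ => -(c * M)) atTop atBot :=
    tendsto_neg_atTop_atBot.comp (tendsto_natCast_atTop_atTop.const_mul_atTop hc)
  obtain ⟨M, hMR⟩ := (hM.eventually (eventually_le_atBot R)).exists
  exact ⟨M, fun t ht => by simpa using hR t (ht.trans hMR)⟩

theorem sum_intervalIntegral_comp_sub_left_le_integral {Φ : ℝ → ℝ} (hΦ : Integrable Φ)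
    (hΦ₀ : ∀ u, 0 ≤ Φ u) {q : ℕ → ℝ} (hq : Monotone q) (y₀ : ℝ) (K : ℕ) :
    ∑ k ∈ range K, ∫ s in q k..q (k + 1), Φ (y₀ - s) ≤ ∫ u, Φ u := by
  rw [intervalIntegral.sum_integral_adjacent_intervals fun k _ =>
      (hΦ.comp_sub_left y₀).intervalIntegrable, intervalIntegral.integral_comp_sub_left,
    intervalIntegral.integral_of_le (sub_le_sub_left (hq (Nat.zero_le K)) y₀)]
  exact setIntegral_le_integral hΦ (ae_of_all _ hΦ₀)

theorem gridPt_add (n i M : ℕ) : gridPt n (i + M) = gridPt n i + 2 / n * M := by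
  simp only [gridPt, Nat.cast_add]
  ring

theorem gridPt_mono (n : ℕ) : Monotone (gridPt n) := fun i j h => by
  unfold gridPt
  gcongr

theorem gridPt_lt_of_nonempty {n i : ℕ} {b : ℝ}
    (h : (Iio b ∩ Ico (gridPt n i) (gridPt n (i + 1))).Nonempty) : gridPt n i < b :=
  let ⟨_, hb, hi, _⟩ := h
  hi.trans_lt hb

theorem sub_le_gridPt_of_nonempty {n j : ℕ} {a : ℝ}
    (h : (Ico (gridPt n j) (gridPt n (j + 1)) ∩ Ici a).Nonempty) : a - 2 / n ≤ gridPt n j := by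
  obtain ⟨v, ⟨-, hv⟩, ha⟩ := h
  have := gridPt_add n j 1
  rw [Nat.cast_one, mul_one] at this
  linarith [Set.mem_Ici.1 ha]

namespace ProjValMeasure

variable (Pm : ProjValMeasure H)

theorem isStarProjection (s : Set ℝ) : IsStarProjection (Pm.P s) := ⟨Pm.idem s, Pm.selfadj s⟩

theorem mul_eq_zero_of_disjoint {s t : Set ℝ} (h : Disjoint s t) : Pm.P s * Pm.P t = 0 := by
  rw [ContinuousLinearMap.mul_def, ← Pm.inter, h.inter_eq, Pm.empty]

section
variable {ι : Type*} {s : Finset ι} {A : ι → Set ℝ}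

theorem isStarProjection_sum (hA : (s : Set ι).PairwiseDisjoint A) :
    IsStarProjection (∑ i ∈ s, Pm.P (A i)) :=
  .sum (fun i _ => Pm.isStarProjection (A i))
    fun _ hi _ hj hij => Pm.mul_eq_zero_of_disjoint (hA hi hj hij)

theorem norm_sum_smul_le (hA : (s : Set ι).PairwiseDisjoint A) (c : ι → ℂ) {C : ℝ} (hC : 0 ≤ C)
    (hc : ∀ i ∈ s, (A i).Nonempty → ‖c i‖ ≤ C) :
    ‖∑ i ∈ s, c i • Pm.P (A i)‖ ≤ C :=
  norm_sum_smul_le_of_isStarProjection (fun i _ => Pm.isStarProjection (A i))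
    (fun _ hi _ hj hij => Pm.mul_eq_zero_of_disjoint (hA hi hj hij)) c hC fun i hi hP =>
      hc i hi (Set.nonempty_iff_ne_empty.2 fun he => hP (by rw [he, Pm.empty]))

end

theorem gauge_sum_sum_smul_le {ν : (H →L[ℂ] H) → ℝ} (hν : IsIdealGauge ν) (S : H →L[ℂ] H)
    {ι κ : Type*} {s : Finset ι} {t : Finset κ} {A : ι → Set ℝ} {B : κ → Set ℝ}
    (hA : (s : Set ι).PairwiseDisjoint A) (hB : (t : Set κ).PairwiseDisjoint B)
    (m : ι → ℕ) {K : ℕ} (hm : ∀ i ∈ s, m i ≤ K)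
    (f : ℕ → κ → ℂ) {ε : ℝ} {C : ℕ → ℝ} (hε : 0 ≤ ε) (hC : ∀ k, 0 ≤ C k)
    (hf₀ : ∀ j ∈ t, (B j).Nonempty → ‖f 0 j‖ ≤ ε)
    (hf : ∀ k < K, ∀ i ∈ s, k < m i → (A i).Nonempty → ∀ j ∈ t, (B j).Nonempty →
      ‖f (k + 1) j - f k j‖ ≤ C k) :
    ν (∑ i ∈ s, ∑ j ∈ t, f (m i) j • (Pm.P (A i) * S * Pm.P (B j))) ≤
      ν S * (ε + ∑ k ∈ range K, C k) := by
  simp_rw [Finset.sum_sum_smul_eq_add_sum_sum_sub s t m hm, ← Finset.sum_mul_mul_sum_smul]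
  have hE : ∀ s' ⊆ s, ‖∑ i ∈ s', Pm.P (A i)‖ ≤ 1 := fun s' hs' =>
    (Pm.isStarProjection_sum (hA.subset hs')).norm_le
  have hterm : ∀ k ∈ range K, ν ((∑ i ∈ s with k < m i, Pm.P (A i)) * S *
      ∑ j ∈ t, (f (k + 1) j - f k j) • Pm.P (B j)) ≤ ν S * C k := by
    intro k hk
    by_cases h : ∃ i ∈ s, k < m i ∧ (A i).Nonempty
    · obtain ⟨i, hi, hki, hne⟩ := h
      exact hν.mul_mul_le_of_norm_le S (hE _ (filter_subset _ _))
        (Pm.norm_sum_smul_le hB _ (hC k) (hf k (mem_range.1 hk) i hi hki hne))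
    · push Not at h
      have hzero : ∑ i ∈ s with k < m i, Pm.P (A i) = 0 := sum_eq_zero fun i hi => by
        rw [mem_filter] at hi
        rw [h i hi.1 hi.2, Pm.empty]
      rw [hzero, zero_mul, zero_mul]
      exact hν.map_zero_le.trans (mul_nonneg (hν.nonneg S) (hC k))
  calc _ ≤ ν ((∑ i ∈ s, Pm.P (A i)) * S * ∑ j ∈ t, f 0 j • Pm.P (B j)) +
        ∑ k ∈ range K, ν ((∑ i ∈ s with k < m i, Pm.P (A i)) * S *
          ∑ j ∈ t, (f (k + 1) j - f k j) • Pm.P (B j)) :=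
        (hν.add_le _ _).trans (add_le_add_right (hν.sum_le _ _) _)
    _ ≤ ν S * ε + ∑ k ∈ range K, ν S * C k :=
        add_le_add (hν.mul_mul_le_of_norm_le S (hE s subset_rfl)
          (Pm.norm_sum_smul_le hB _ hε hf₀)) (sum_le_sum hterm)
    _ = ν S * (ε + ∑ k ∈ range K, C k) := by rw [mul_add, mul_sum]

theorem compress_doubleStieltjesSum (χ : ℝ → ℂ) (S : H →L[ℂ] H) (n : ℕ) (s t : Set ℝ) :
    Pm.P s ∘L doubleStieltjesSum Pm χ S n ∘L Pm.P t =
      ∑ i ∈ range (n * n), ∑ j ∈ range (n * n), χ (gridPt n i - gridPt n j) •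
        (Pm.P (s ∩ Ico (gridPt n i) (gridPt n (i + 1))) * S *
          Pm.P (Ico (gridPt n j) (gridPt n (j + 1)) ∩ t)) := by
  simp only [doubleStieltjesSum, Pm.inter, ContinuousLinearMap.mul_def,
    ContinuousLinearMap.comp_finsetSum, ContinuousLinearMap.finsetSum_comp,
    ContinuousLinearMap.comp_smul, ContinuousLinearMap.smul_comp, ContinuousLinearMap.comp_assoc]

theorem gauge_compress_doubleStieltjesSum_le_add {ν : (H →L[ℂ] H) → ℝ} (hν : IsIdealGauge ν)
    {χ χ' : ℝ → ℂ} {ψ : ℝ → ℝ} (hχ : ∀ x, HasDerivAt χ (χ' x) x)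
    (hχ_atBot : Tendsto χ atBot (𝓝 0)) (hχ' : ∀ x, ‖χ' x‖ ≤ ψ |x|) (hψ : Antitone ψ)
    (hψ₀ : ∀ u, 0 ≤ ψ u) (S : H →L[ℂ] H) (b₁ a₂ : ℝ) {n : ℕ} (hn : n ≠ 0)
    (hψ_int : IntegrableOn ψ (Ioi (a₂ - b₁ - 2 / n))) {ε : ℝ} (hε : 0 < ε) :
    ν (Pm.P (Iio b₁) ∘L doubleStieltjesSum Pm χ S n ∘L Pm.P (Ici a₂)) ≤
      ν S * (ε + ∫ u in Ioi (a₂ - b₁ - 2 / n), ψ u) := by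
  set γ := a₂ - b₁ - 2 / n
  set y₀ := a₂ - 2 / n
  -- `Φ (y₀ - s) = ψ (y₀ - s)` for `s < b₁`, the only range where the left projections live
  set Φ := (Ioi γ).indicator ψ
  have hΦ_int : Integrable Φ := (integrable_indicator_iff measurableSet_Ioi).2 hψ_int
  have hΦ₀ : ∀ u, 0 ≤ Φ u := indicator_nonneg fun u _ => hψ₀ u
  obtain ⟨M, hM⟩ := exists_nat_forall_norm_le_of_tendsto_atBot hχ_atBot hε (c := 2 / n)
    (by positivity)
  -- `q` extends the grid `M` steps to the left, where `χ (q 0 - ·)` is already `ε`-small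
  set q : ℕ → ℝ := fun k => gridPt n k - 2 / n * M
  have hq : ∀ i, q (i + M) = gridPt n i := fun i => by simp only [q, gridPt_add]; ring
  have hq_mono : Monotone q := fun k l h => sub_le_sub_right (gridPt_mono n h) _
  have hcells := (gridPt_mono n).pairwise_disjoint_on_Ico_succ
  set C : ℕ → ℝ := fun k => ∫ s in q k..q (k + 1), Φ (y₀ - s)
  have hf₀ : ∀ j ∈ range (n * n), (Ico (gridPt n j) (gridPt n (j + 1)) ∩ Ici a₂).Nonempty →
      ‖χ (q 0 - gridPt n j)‖ ≤ ε := fun j _ _ =>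
    hM _ (by have := gridPt_mono n (Nat.zero_le j); simp only [q]; linarith)
  have hf : ∀ k < n * n + M, ∀ i ∈ range (n * n), k < i + M →
      (Iio b₁ ∩ Ico (gridPt n i) (gridPt n (i + 1))).Nonempty → ∀ j ∈ range (n * n),
      (Ico (gridPt n j) (gridPt n (j + 1)) ∩ Ici a₂).Nonempty →
      ‖χ (q (k + 1) - gridPt n j) - χ (q k - gridPt n j)‖ ≤ C k := by
    rintro k - i - hki hAi j - hBj
    have hk : q (k + 1) < b₁ :=
      (hq_mono hki).trans_lt ((hq i).trans_lt (gridPt_lt_of_nonempty hAi))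
    calc _ ≤ ∫ s in q k..q (k + 1), ψ (y₀ - s) :=
          norm_sub_le_integral_of_norm_deriv_le_antitone hχ hχ' hψ (hq_mono k.le_succ)
            (sub_le_gridPt_of_nonempty hBj)
      _ = C k := intervalIntegral.integral_congr fun s hs => by
          have hs' : s ≤ q (k + 1) := (uIcc_of_le (hq_mono k.le_succ) ▸ hs).2
          exact (indicator_of_mem (show y₀ - s ∈ Ioi γ by rw [Set.mem_Ioi]; linarith) ψ).symm
  have key := Pm.gauge_sum_sum_smul_le hν S
    (fun i _ j _ h => (hcells h).mono Set.inter_subset_right Set.inter_subset_right)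
    (fun i _ j _ h => (hcells h).mono Set.inter_subset_left Set.inter_subset_left)
    (· + M) (fun i hi => by have := mem_range.1 hi; omega) (fun k j => χ (q k - gridPt n j)) hε.le
    (fun k => intervalIntegral.integral_nonneg (hq_mono k.le_succ) fun s _ => hΦ₀ _) hf₀ hf
  simp only [hq] at key
  rw [Pm.compress_doubleStieltjesSum]
  refine key.trans (mul_le_mul_of_nonneg_left (add_le_add_right ?_ ε) (hν.nonneg S))
  calc ∑ k ∈ range (n * n + M), C k ≤ ∫ u, Φ u :=
        sum_intervalIntegral_comp_sub_left_le_integral hΦ_int hΦ₀ hq_mono y₀ _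
    _ = ∫ u in Ioi γ, ψ u := integral_indicator measurableSet_Ioi

theorem gauge_compress_doubleStieltjesSum_le {ν : (H →L[ℂ] H) → ℝ} (hν : IsIdealGauge ν)
    {χ χ' : ℝ → ℂ} {ψ : ℝ → ℝ} (hχ : ∀ x, HasDerivAt χ (χ' x) x)
    (hχ_atBot : Tendsto χ atBot (𝓝 0)) (hχ' : ∀ x, ‖χ' x‖ ≤ ψ |x|) (hψ : Antitone ψ)
    (hψ₀ : ∀ u, 0 ≤ ψ u) (S : H →L[ℂ] H) (b₁ a₂ : ℝ) {n : ℕ} (hn : n ≠ 0)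
    (hψ_int : IntegrableOn ψ (Ioi (a₂ - b₁ - 2 / n))) :
    ν (Pm.P (Iio b₁) ∘L doubleStieltjesSum Pm χ S n ∘L Pm.P (Ici a₂)) ≤
      ν S * ∫ u in Ioi (a₂ - b₁ - 2 / n), ψ u := by
  have hlim : Tendsto (fun ε => ν S * (ε + ∫ u in Ioi (a₂ - b₁ - 2 / n), ψ u)) (𝓝[>] 0)
      (𝓝 (ν S * (0 + ∫ u in Ioi (a₂ - b₁ - 2 / n), ψ u))) :=
    ((tendsto_nhdsWithin_of_tendsto_nhds tendsto_id).add_const _).const_mul _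
  rw [zero_add] at hlim
  exact ge_of_tendsto hlim (eventually_nhdsWithin_of_forall fun ε hε =>
    Pm.gauge_compress_doubleStieltjesSum_le_add hν hχ hχ_atBot hχ' hψ hψ₀ S b₁ a₂ hn hψ_int hε)

end ProjValMeasure

theorem double_operator_integral_offdiagonal_bound_general (Pm : ProjValMeasure H)
    (ν : (H →L[ℂ] H) → ℝ)
    (hνnn : ∀ S, 0 ≤ ν S)
    (hνtri : ∀ S T, ν (S + T) ≤ ν S + ν T)
    (hνideal : ∀ (A S B : H →L[ℂ] H), ν (A ∘L S ∘L B) ≤ ‖A‖ * ν S * ‖B‖)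
    (χ : ℝ → ℂ) (χ' : ℝ → ℂ) (φ : ℝ → ℝ)
    (hχderiv : ∀ x, HasDerivAt χ (χ' x) x)
    (hχdecay : Tendsto χ (cocompact ℝ) (nhds 0))
    (hχ'bound : ∀ x, ‖χ' x‖ ≤ φ |x|)
    (hφnn : ∀ s, 0 ≤ φ s)
    (hφmono : AntitoneOn φ (Set.Ici (0 : ℝ)))
    (hφint : IntegrableOn φ (Set.Ioi (0 : ℝ)) volume)
    (S Sχ : H →L[ℂ] H) (hS : IsDoubleStieltjesIntegral Pm χ S Sχ)
    (b₁ a₂ : ℝ) (hδ : 0 ≤ a₂ - b₁) :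
    ν (Pm.P (Set.Iio b₁) ∘L Sχ ∘L Pm.P (Set.Ici a₂)) ≤
      ν S * ∫ s in Set.Ioi (a₂ - b₁), φ s := by
  have hν : IsIdealGauge ν := ⟨hνnn, hνtri, fun A S B => by
    simpa only [ContinuousLinearMap.mul_def, ContinuousLinearMap.comp_assoc] using hνideal A S B⟩
  set ψ : ℝ → ℝ := fun u => φ (max u 0)
  have hψφ : EqOn ψ φ (Ici 0) := fun u hu => by simp only [ψ, max_eq_left hu.out]
  have hψ : Antitone ψ := fun u v h =>
    hφmono (le_max_right u 0) (le_max_right v 0) (max_le_max h le_rfl)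
  have hψ_int : ∀ c, IntegrableOn ψ (Ioi c) := hψ.integrableOn_Ioi_of_integrableOn_Ioi
    (hφint.congr_fun (hψφ.symm.mono Ioi_subset_Ici_self) measurableSet_Ioi)
  have hbound : ∀ x, ‖χ' x‖ ≤ ψ |x| := fun x => (hψφ (abs_nonneg x)).symm ▸ hχ'bound x
  have hcompress : Continuous fun T => Pm.P (Iio b₁) ∘L T ∘L Pm.P (Ici a₂) := by fun_prop
  have hδ_n : Tendsto (fun n : ℕ => a₂ - b₁ - 2 / n) atTop (𝓝 (a₂ - b₁)) := by
    simpa using tendsto_const_nhds.sub (tendsto_const_div_atTop_nhds_zero_nat (2 : ℝ))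
  have htail : Tendsto (fun n : ℕ => ν S * ∫ u in Ioi (a₂ - b₁ - 2 / n), ψ u) atTop
      (𝓝 (ν S * ∫ u in Ioi (a₂ - b₁), ψ u)) :=
    (((hψ_int _).continuousOn_Ici_primitive_Ioi.continuousAt
      (Ici_mem_nhds (sub_one_lt (a₂ - b₁)))).tendsto.comp hδ_n).const_mul _
  calc ν (Pm.P (Iio b₁) ∘L Sχ ∘L Pm.P (Ici a₂)) ≤ ν S * ∫ u in Ioi (a₂ - b₁), ψ u :=
        le_of_tendsto_of_tendsto ((hν.continuous.tendsto _).comp ((hcompress.tendsto _).comp hS))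
          htail ((eventually_ne_atTop 0).mono fun n hn =>
            Pm.gauge_compress_doubleStieltjesSum_le hν hχderiv
              (hχdecay.mono_left atBot_le_cocompact) hbound hψ (fun u => hφnn _) S b₁ a₂ hn
              (hψ_int _))
    _ = ν S * ∫ s in Ioi (a₂ - b₁), φ s := by
        rw [setIntegral_congr_fun measurableSet_Ioi (hψφ.mono fun u hu => hδ.trans hu.out.le)]

/-- If `χ` is differentiable, vanishes at infinity, and `|χ'(x)| ≤ φ(|x|)` with
`φ ≥ 0` non-increasing and integrable, then for the intervals `Δ¹ = (-∞, b₁)`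
and `Δ² = [a₂, ∞)` with `δ = a₂ - b₁ ≥ 0`, the double operator integral
`Sχ = ∫∫ χ(x−y) P(dx) S P(dy)` of a trace-class `S` satisfies
`‖P(Δ¹) Sχ P(Δ²)‖₁ ≤ ‖S‖₁ ∫_δ^∞ φ(s) ds`. -/
theorem double_operator_integral_offdiagonal_bound (Pm : ProjValMeasure H)
    (ν : (H →L[ℂ] H) → ℝ)
    (hν0 : ν 0 = 0) (hνnn : ∀ S, 0 ≤ ν S)
    (hνtri : ∀ S T, ν (S + T) ≤ ν S + ν T)
    (hνop : ∀ S, ‖S‖ ≤ ν S)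
    (hνideal : ∀ (A S B : H →L[ℂ] H), ν (A ∘L S ∘L B) ≤ ‖A‖ * ν S * ‖B‖)
    (χ : ℝ → ℂ) (χ' : ℝ → ℂ) (φ : ℝ → ℝ)
    (hχderiv : ∀ x, HasDerivAt χ (χ' x) x)
    (hχdecay : Tendsto χ (cocompact ℝ) (nhds 0))
    (hχ'bound : ∀ x, ‖χ' x‖ ≤ φ |x|)
    (hφnn : ∀ s, 0 ≤ φ s)
    (hφmono : AntitoneOn φ (Set.Ici (0 : ℝ)))
    (hφint : IntegrableOn φ (Set.Ioi (0 : ℝ)) volume)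
    (S Sχ : H →L[ℂ] H) (hS : IsDoubleStieltjesIntegral Pm χ S Sχ)
    (b₁ a₂ : ℝ) (hδ : 0 ≤ a₂ - b₁) :
    ν (Pm.P (Set.Iio b₁) ∘L Sχ ∘L Pm.P (Set.Ici a₂)) ≤
      ν S * ∫ s in Set.Ioi (a₂ - b₁), φ s :=
  double_operator_integral_offdiagonal_bound_general Pm ν hνnn hνtri hνideal χ χ' φ hχderiv hχdecay
    hχ'bound hφnn hφmono hφint S Sχ hS b₁ a₂ hδ
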